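/- If F is a CNF over V, P ⊆ V, and the set of projected cubes of size 1 (full assignments over P extendible to models of F) is partitioned by a finite family of pairwise disjoint projected cubes S1,...,Sk (each Si a consistent literal set over P, every P-assignment extending Si extendible to a model, and every extendible P-assignment extends exactly one Si), then ct(F,P) = Σ_i 2^(|P| − |Si|). -/

import Mathlib

abbrev Var := ℕ

abbrev Assg (V : Finset Var) := {x // x ∈ V} → Bool

def extAssg (V : Finset Var) (g : Assg V) : Var → Bool :=
  fun x => if h : x ∈ V then g ⟨x, h⟩ else false

def dependsOn (F : (Var → Bool) → Bool) (V : Finset Var) : Prop :=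
  ∀ σ τ : Var → Bool, (∀ x ∈ V, σ x = τ x) → F σ = F τ

def models (F : (Var → Bool) → Bool) (V : Finset Var) : Finset (Assg V) :=
  Finset.univ.filter (fun g => F (extAssg V g) = true)

def ct (F : (Var → Bool) → Bool) (V : Finset Var) : ℕ := (models F V).card

def restrictAssg {V P : Finset Var} (h : P ⊆ V) (g : Assg V) : Assg P :=
  fun x => g ⟨x.1, h x.2⟩

def projCt (F : (Var → Bool) → Bool) (V P : Finset Var) (h : P ⊆ V) : ℕ :=
  ((models F V).image (restrictAssg h)).card

abbrev Lit := Var × Bool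
abbrev Clause := Finset Lit
abbrev CNF := Finset Clause

def clauseSat (σ : Var → Bool) (C : Clause) : Prop := ∃ l ∈ C, σ l.1 = l.2

instance (σ : Var → Bool) (C : Clause) : Decidable (clauseSat σ C) := by
  unfold clauseSat; infer_instance

def cnfSat (σ : Var → Bool) (F : CNF) : Prop := ∀ C ∈ F, clauseSat σ C

instance (σ : Var → Bool) (F : CNF) : Decidable (cnfSat σ F) := by
  unfold cnfSat; infer_instance

def cnfModels (F : CNF) (V : Finset Var) : Finset (Assg V) :=
  Finset.univ.filter (fun g => cnfSat (extAssg V g) F)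

def cnfCt (F : CNF) (V : Finset Var) : ℕ := (cnfModels F V).card

def cnfProjCt (F : CNF) (V P : Finset Var) (h : P ⊆ V) : ℕ :=
  ((cnfModels F V).image (restrictAssg h)).card

def cnfVars (F : CNF) : Finset Var := F.biUnion (fun C => C.image Prod.fst)

def consistent (θ : Finset Lit) : Prop := ∀ v : Var, ¬((v, true) ∈ θ ∧ (v, false) ∈ θ)

def extendsL (θ : Finset Lit) {V : Finset Var} (g : Assg V) : Prop :=
  ∀ l ∈ θ, extAssg V g l.1 = l.2

instance (θ : Finset Lit) (V : Finset Var) (g : Assg V) : Decidable (extendsL θ g) := by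
  unfold extendsL; infer_instance

def negLit (l : Lit) : Lit := (l.1, !l.2)

def residualCNF (F : CNF) (θ : Finset Lit) : CNF :=
  (F.filter (fun C => ∀ l ∈ C, l ∉ θ)).image (fun C => C.filter (fun l => negLit l ∉ θ))

/-!
The projections of the models of `F` onto `P` are exactly the union of the sets of total
`P`-extensions of the cubes `S i`, and uniqueness in the partition hypothesis makes these sets
pairwise disjoint. A `P`-assignment extends a literal set `θ` over `P` iff at every variable it
avoids the value opposite to a literal of `θ`, so the extensions form a product set; when `θ` is
consistent this leaves one value at each of the `|θ|` variables of `θ` and two elsewhere, giving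
`2 ^ (|P| - |θ|)` extensions.
-/

open Finset

lemma extAssg_of_mem {P : Finset Var} (h : Assg P) {v : Var} (hv : v ∈ P) :
    extAssg P h v = h ⟨v, hv⟩ :=
  dif_pos hv

lemma consistent.injOn_fst {θ : Finset Lit} (hθ : consistent θ) :
    Set.InjOn Prod.fst (θ : Set Lit) := by
  rintro ⟨v, b⟩ hb ⟨_, c⟩ hc rfl
  cases b <;> cases c
  all_goals first | rfl | exact absurd ⟨‹_›, ‹_›⟩ (hθ v)

def extensions (θ : Finset Lit) (P : Finset Var) : Finset (Assg P) :=
  univ.filter fun h => extendsL θ h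

@[simp]
lemma mem_extensions {θ : Finset Lit} {P : Finset Var} {h : Assg P} :
    h ∈ extensions θ P ↔ extendsL θ h := by
  simp [extensions]

lemma extendsL_iff_forall_notMem {θ : Finset Lit} {P : Finset Var}
    (hθP : ∀ l ∈ θ, l.1 ∈ P) (h : Assg P) :
    extendsL θ h ↔ ∀ x : P, (x.1, !h x) ∉ θ := by
  constructor
  · intro hext x hx
    have := hext _ hx
    rw [extAssg_of_mem h x.2] at this
    exact Bool.not_ne_self _ this.symm
  · rintro hθ ⟨v, b⟩ hl
    rw [extAssg_of_mem h (hθP _ hl)]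
    by_contra hne
    exact hθ ⟨v, hθP _ hl⟩ (by simpa [Bool.eq_not_iff.mpr hne] using hl)

lemma card_filter_notMem_of_consistent {θ : Finset Lit} (hθ : consistent θ) (v : Var) :
    #(univ.filter fun b => (v, !b) ∉ θ) = if v ∈ θ.image Prod.fst then 1 else 2 := by
  have := hθ v
  by_cases ht : (v, true) ∈ θ <;> by_cases hf : (v, false) ∈ θ <;>
    simp_all [Fintype.univ_bool, filter_insert, filter_singleton]

lemma card_extensions {θ : Finset Lit} {P : Finset Var}
    (hθP : ∀ l ∈ θ, l.1 ∈ P) (hθ : consistent θ) :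
    #(extensions θ P) = 2 ^ (#P - #θ) := by
  set Q := θ.image Prod.fst
  have hQP : Q ⊆ P := by
    simpa [Q, image_subset_iff] using hθP
  have hQ : #Q = #θ := card_image_of_injOn hθ.injOn_fst
  have hpi : extensions θ P =
      Fintype.piFinset fun x : P => univ.filter fun b => (x.1, !b) ∉ θ := by
    ext h
    simp [Fintype.mem_piFinset, extendsL_iff_forall_notMem hθP]
  rw [hpi, Fintype.card_piFinset]
  simp only [card_filter_notMem_of_consistent hθ]
  rw [prod_coe_sort P (fun v => if v ∈ Q then 1 else 2), prod_ite, prod_const_one, prod_const,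
    one_mul, ← sdiff_eq_filter, card_sdiff_of_subset hQP, hQ]

theorem stmt18 (F : CNF) (V P : Finset Var) (hPV : P ⊆ V)
    (k : ℕ) (S : Fin k → Finset Lit)
    (hSP : ∀ i, ∀ l ∈ S i, l.1 ∈ P) (hScons : ∀ i, consistent (S i))
    (hcover : ∀ i, ∀ h : Assg P, extendsL (S i) h →
      ∃ g ∈ cnfModels F V, restrictAssg hPV g = h)
    (hpart : ∀ h : Assg P, (∃ g ∈ cnfModels F V, restrictAssg hPV g = h) →
      ∃! i, extendsL (S i) h) :
    cnfProjCt F V P hPV = ∑ i, 2 ^ (P.card - (S i).card) := by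
  have hproj : (cnfModels F V).image (restrictAssg hPV) =
      univ.biUnion fun i => extensions (S i) P := by
    ext h
    simp only [mem_image, mem_biUnion, mem_univ, true_and, mem_extensions]
    constructor
    · intro hmodel
      obtain ⟨i, hi, -⟩ := hpart h hmodel
      exact ⟨i, hi⟩
    · rintro ⟨i, hi⟩
      exact hcover i h hi
  have hdisj : ((univ : Finset (Fin k)) : Set (Fin k)).PairwiseDisjoint
      fun i => extensions (S i) P := by
    intro i _ j _ hij
    refine disjoint_left.mpr fun h hi hj => hij ?_
    rw [mem_extensions] at hi hj
    obtain ⟨_, -, huniq⟩ := hpart h (hcover i h hi)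
    exact (huniq i hi).trans (huniq j hj).symm
  rw [cnfProjCt, hproj, card_biUnion hdisj]
  exact sum_congr rfl fun i _ => card_extensions (hSP i) (hScons i)
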